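/- Let A, B be bounded linear operators on G such that M^{A,B} is boundedly invertible. Then the linear subspace {(B*u, A*u) : u ∈ G} is a closed subspace of G ⊕ G. -/

import Mathlib

open ContinuousLinearMap

variable {G : Type*} [NormedAddCommGroup G] [InnerProductSpace ℂ G] [CompleteSpace G]

/-- The operator `M^{A,B}` on `G × G`, `(x₁,x₂) ↦ (A x₁ - B x₂, B x₁ + A x₂)`. -/
noncomputable def MAB (A B : G →L[ℂ] G) : (G × G) →L[ℂ] (G × G) :=
  ((A.comp (fst ℂ G G)) - (B.comp (snd ℂ G G))).prod
    ((B.comp (fst ℂ G G)) + (A.comp (snd ℂ G G)))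

/-- The linear relation `Λ^{A,B} = {(x₁,x₂) : A x₁ = B x₂}`. -/
def LambdaAB (A B : G →L[ℂ] G) : Submodule ℂ (G × G) where
  carrier := {p | A p.1 = B p.2}
  add_mem' := by
    intro a b ha hb
    simp only [Set.mem_setOf_eq] at *
    simp [ha, hb]
  zero_mem' := by simp
  smul_mem' := by
    intro c p hp
    simp only [Set.mem_setOf_eq] at *
    simp [hp]

/-- The adjoint of a linear relation. -/
def relAdjoint (Λ : Submodule ℂ (G × G)) : Submodule ℂ (G × G) where
  carrier := {p | ∀ q ∈ Λ, (inner ℂ p.1 q.2 : ℂ) = inner ℂ p.2 q.1}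
  add_mem' := by
    intro a b ha hb q hq
    simp [inner_add_left, ha q hq, hb q hq]
  zero_mem' := by
    intro q hq; simp
  smul_mem' := by
    intro c p hp q hq
    simp [inner_smul_left, hp q hq]

/-- A linear relation is self-adjoint if it equals its adjoint. -/
def IsSelfAdjointRel (Λ : Submodule ℂ (G × G)) : Prop := relAdjoint Λ = Λ

/-- A bounded operator is boundedly invertible if it has a bounded two-sided inverse. -/
def IsBoundedlyInvertible {E F : Type*} [NormedAddCommGroup E] [NormedSpace ℂ E]
    [NormedAddCommGroup F] [NormedSpace ℂ F] (T : E →L[ℂ] F) : Prop :=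
  ∃ T' : F →L[ℂ] E, (∀ x, T' (T x) = x) ∧ (∀ y, T (T' y) = y)

/-- The pair `(A,B)` is normalized if `A B* = B A*` and `M^{A,B}` is boundedly invertible. -/
noncomputable def IsNormalized (A B : G →L[ℂ] G) : Prop :=
  A ∘L adjoint B = B ∘L adjoint A ∧ IsBoundedlyInvertible (MAB A B)

/-! The adjoint of `M^{A,B}` sends `(0, u)` to `(B* u, A* u)`. So the set in question is the
image of the closed subspace `0 ⊕ G` under `(M^{A,B})*`, which is invertible along with `M^{A,B}`
and hence a homeomorphism. -/

theorem IsBoundedlyInvertible.isUnit {E : Type*} [NormedAddCommGroup E] [NormedSpace ℂ E]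
    {T : E →L[ℂ] E} (hT : IsBoundedlyInvertible T) : IsUnit T := by
  obtain ⟨T', hleft, hright⟩ := hT
  exact ⟨⟨T, T', ext hright, ext hleft⟩, rfl⟩

theorem IsUnit.isClosedMap_adjoint {𝕜 E : Type*} [RCLike 𝕜] [NormedAddCommGroup E]
    [InnerProductSpace 𝕜 E] [CompleteSpace E] {T : E →L[𝕜] E} (hT : IsUnit T) :
    IsClosedMap (adjoint T) := by
  obtain ⟨u, hu⟩ := hT.star
  rw [← star_eq_adjoint, ← hu]
  exact (ContinuousLinearEquiv.ofUnit u).toHomeomorph.isClosedMap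

/-- `M^{A,B}` on the Hilbert sum `G ⊕ G`, which is `WithLp 2 (G × G)`: Mathlib's `G × G` carries
the sup norm. -/
noncomputable def MABL2 (A B : G →L[ℂ] G) : WithLp 2 (G × G) →L[ℂ] WithLp 2 (G × G) :=
  (WithLp.prodContinuousLinearEquiv 2 ℂ G G).symm.conjContinuousAlgEquiv (MAB A B)

theorem adjoint_MABL2_toLp_zero (A B : G →L[ℂ] G) (u : G) :
    adjoint (MABL2 A B) (WithLp.toLp 2 (0, u)) = WithLp.toLp 2 (adjoint B u, adjoint A u) := by
  refine ext_inner_right ℂ fun v => ?_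
  simp [adjoint_inner_left, MABL2, MAB, inner_add_right, WithLp.prodContinuousLinearEquiv_symm_apply]

theorem range_adjoints_eq_image (A B : G →L[ℂ] G) :
    Set.range (fun u : G => (adjoint B u, adjoint A u)) =
      WithLp.ofLp '' (adjoint (MABL2 A B) '' {p | (WithLp.ofLp p).1 = 0}) := by
  ext p
  constructor
  · rintro ⟨u, rfl⟩
    exact ⟨_, ⟨WithLp.toLp 2 (0, u), rfl, adjoint_MABL2_toLp_zero A B u⟩, rfl⟩
  · rintro ⟨_, ⟨⟨x, u⟩, hx, rfl⟩, rfl⟩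
    obtain rfl : x = 0 := hx
    exact ⟨u, by rw [adjoint_MABL2_toLp_zero]⟩

theorem isClosed_range_adjoints (A B : G →L[ℂ] G)
    (hM : IsBoundedlyInvertible (MAB A B)) :
    IsClosed (Set.range (fun u : G => (adjoint B u, adjoint A u))) := by
  have hclosed : IsClosed {p : WithLp 2 (G × G) | (WithLp.ofLp p).1 = 0} :=
    isClosed_eq (by fun_prop) continuous_const
  rw [range_adjoints_eq_image]
  have hunit : IsUnit (MABL2 A B) := hM.isUnit.map _
  exact (WithLp.homeomorphProd 2 G G).isClosedMap _ (hunit.isClosedMap_adjoint _ hclosed)
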